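/- Let n ≥ 1, suppose f : ℝ^n → ℝ, V, W satisfy Assumption (A1) with constants λ₁, λ₂, λ₃, λ₄, c₁, c₂, let v : [0,∞) → ℝ be continuously differentiable with sup_{t≥0}(|v(t)| + |v'(t)|) ≤ M for some M > 0, and let r ≥ 1. Then for every initial value y⁰ ∈ ℝ^n there exists a unique differentiable y : [0,∞) → ℝ^n with y(0) = y⁰ satisfying the time-scaled error system y₁'(t) = y₂(t) − (1/r) v'(t/r), y_i'(t) = y_{i+1}(t) for i = 2,…,n−1, y_n'(t) = f(y(t)); moreover every such solution satisfies ‖y(t)‖² ≤ (1/λ₁)·(V(y(0)) + c₁² M² / λ₁)·e^{t/(2r)} for all t ≥ 0. In particular the solution exists globally and does not blow up in finite time. -/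

import Mathlib

open scoped BigOperators

/-- Assumption (A1) of the paper (0-based indices; see the paper). -/
structure AssumptionA1 (n : ℕ) (f : EuclideanSpace ℝ (Fin n) → ℝ)
    (V W : EuclideanSpace ℝ (Fin n) → ℝ)
    (l1 l2 l3 l4 c1 c2 : ℝ) : Prop where
  l1_pos : 0 < l1
  l2_pos : 0 < l2
  l3_pos : 0 < l3
  l4_pos : 0 < l4
  c1_pos : 0 < c1
  c2_pos : 0 < c2
  f_locallyLipschitz : LocallyLipschitz f
  f_zero : f 0 = 0
  V_contDiff : ContDiff ℝ 2 V
  W_continuous : Continuous W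
  V_lower : ∀ z : EuclideanSpace ℝ (Fin n), l1 * ‖z‖ ^ 2 ≤ V z
  V_upper : ∀ z : EuclideanSpace ℝ (Fin n), V z ≤ l2 * ‖z‖ ^ 2
  W_lower : ∀ z : EuclideanSpace ℝ (Fin n), l3 * ‖z‖ ^ 2 ≤ W z
  W_upper : ∀ z : EuclideanSpace ℝ (Fin n), W z ≤ l4 * ‖z‖ ^ 2
  lyapunov : ∀ z : EuclideanSpace ℝ (Fin n),
    (∑ i : Fin n, fderiv ℝ V z (EuclideanSpace.single i 1) *
      (if h : (i : ℕ) + 1 < n then z ⟨(i : ℕ) + 1, h⟩ else f z)) ≤ -W z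
  grad_bound : ∀ z : EuclideanSpace ℝ (Fin n), ∀ j : Fin n,
    ((j : ℕ) = 0 ∨ (j : ℕ) = n - 1) →
    |fderiv ℝ V z (EuclideanSpace.single j 1)| ≤ c1 * ‖z‖
  hess_bound : ∀ z : EuclideanSpace ℝ (Fin n), ∀ j : Fin n,
    ((j : ℕ) = 0 ∨ (j : ℕ) = n - 1) →
    |fderiv ℝ (fun w => fderiv ℝ V w (EuclideanSpace.single j 1)) z
      (EuclideanSpace.single j 1)| ≤ c2

/-- Right-hand side of the time-scaled (noise-free) tracking-error system
`y₁' = y₂ − (1/r) v'(t/r)`, `yᵢ' = y_{i+1}` (`i = 2,…,n−1`), `y_n' = f(y)`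
(0-based indices). -/
noncomputable def errField (n : ℕ) (f : EuclideanSpace ℝ (Fin n) → ℝ) (v : ℝ → ℝ)
    (r t : ℝ) (w : EuclideanSpace ℝ (Fin n)) : EuclideanSpace ℝ (Fin n) :=
  (WithLp.equiv 2 (Fin n → ℝ)).symm fun i : Fin n =>
    (if h : (i : ℕ) + 1 < n then w ⟨(i : ℕ) + 1, h⟩ else f w)
      - (if (i : ℕ) = 0 then (1 / r) * deriv v (t / r) else 0)

open Set
open scoped NNReal

set_option maxHeartbeats 1000000

lemma errField_apply (n : ℕ) (f : EuclideanSpace ℝ (Fin n) → ℝ) (v : ℝ → ℝ)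
    (r t : ℝ) (w : EuclideanSpace ℝ (Fin n)) (i : Fin n) :
    errField n f v r t w i = (if h : (i : ℕ) + 1 < n then w ⟨(i : ℕ) + 1, h⟩ else f w)
      - (if (i : ℕ) = 0 then (1 / r) * deriv v (t / r) else 0) := rfl

lemma norm_le_sqrt_mul {n : ℕ} (x : EuclideanSpace ℝ (Fin n)) {b : ℝ} (hb : 0 ≤ b)
    (h : ∀ i, |x i| ≤ b) : ‖x‖ ≤ Real.sqrt n * b := by
  rw [EuclideanSpace.norm_eq]
  have h1 : ∑ i : Fin n, ‖x i‖ ^ 2 ≤ ∑ _i : Fin n, b ^ 2 :=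
    Finset.sum_le_sum fun i _ => by
      have := h i
      have : ‖x i‖ ≤ b := by rwa [Real.norm_eq_abs]
      nlinarith [norm_nonneg (x i)]
  calc Real.sqrt (∑ i, ‖x i‖ ^ 2) ≤ Real.sqrt ((n : ℝ) * b ^ 2) := by
        apply Real.sqrt_le_sqrt; simpa using h1
    _ = Real.sqrt n * b := by
        rw [Real.sqrt_mul (by positivity), Real.sqrt_sq hb]

lemma abs_coord_le {n : ℕ} (x : EuclideanSpace ℝ (Fin n)) (i : Fin n) : |x i| ≤ ‖x‖ := by
  rw [EuclideanSpace.norm_eq, ← Real.sqrt_sq_eq_abs]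
  apply Real.sqrt_le_sqrt
  have : x i ^ 2 = ‖x i‖ ^ 2 := by rw [Real.norm_eq_abs, sq_abs]
  rw [this]
  exact Finset.single_le_sum (f := fun j => ‖x j‖ ^ 2) (fun j _ => by positivity) (Finset.mem_univ i)

lemma euclid_decomp {n : ℕ} (w : EuclideanSpace ℝ (Fin n)) :
    w = ∑ i, w i • EuclideanSpace.single i (1:ℝ) := by
  ext j
  have : (∑ i, w i • EuclideanSpace.single i (1:ℝ)) j = ∑ i, (w i • EuclideanSpace.single i (1:ℝ)) j := by
    induction (Finset.univ : Finset (Fin n)) using Finset.cons_induction with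
    | empty => rfl
    | cons a s ha ih => rw [Finset.sum_cons, Finset.sum_cons, ← ih]; rfl
  simp [this, EuclideanSpace.single_apply]

lemma clm_expand {n : ℕ} (L : EuclideanSpace ℝ (Fin n) →L[ℝ] ℝ) (w : EuclideanSpace ℝ (Fin n)) :
    L w = ∑ i, w i * L (EuclideanSpace.single i 1) := by
  conv_lhs => rw [euclid_decomp w]
  rw [map_sum]
  simp [smul_eq_mul]


variable {E' : Type*} [NormedAddCommGroup E'] [NormedSpace ℝ E']

noncomputable def projBall (R : ℝ) (w : E') : E' :=
  if ‖w‖ ≤ R then w else (R / ‖w‖) • w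

lemma projBall_eq_self {R : ℝ} {w : E'} (hw : ‖w‖ ≤ R) : projBall R w = w := if_pos hw

lemma norm_projBall_le {R : ℝ} (hR : 0 ≤ R) (w : E') : ‖projBall R w‖ ≤ R := by
  unfold projBall; split_ifs with h
  · exact h
  · push_neg at h
    have hw : 0 < ‖w‖ := lt_of_le_of_lt hR h
    rw [norm_smul, Real.norm_eq_abs, abs_of_nonneg (div_nonneg hR hw.le),
      div_mul_cancel₀ _ hw.ne']

private lemma projBall_aux {R : ℝ} (hR : 0 ≤ R) {w w' : E'} (h1 : ‖w‖ ≤ R) (h2 : R < ‖w'‖) :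
    ‖projBall R w - projBall R w'‖ ≤ 2 * ‖w - w'‖ := by
  have hb : 0 < ‖w'‖ := lt_of_le_of_lt hR h2
  rw [projBall_eq_self h1, projBall, if_neg (not_le.mpr h2)]
  have key : ‖w' - (R / ‖w'‖) • w'‖ = ‖w'‖ - R := by
    have : w' - (R / ‖w'‖) • w' = (1 - R / ‖w'‖) • w' := by
      rw [sub_smul, one_smul]
    rw [this, norm_smul, Real.norm_eq_abs, abs_of_nonneg, sub_mul, one_mul,
      div_mul_cancel₀ _ hb.ne']
    have : R / ‖w'‖ ≤ 1 := (div_le_one hb).mpr h2.le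
    linarith
  calc ‖w - (R / ‖w'‖) • w'‖ ≤ ‖w - w'‖ + ‖w' - (R / ‖w'‖) • w'‖ := by
        have := norm_sub_le_norm_sub_add_norm_sub w w' ((R / ‖w'‖) • w')
        exact this
    _ = ‖w - w'‖ + (‖w'‖ - R) := by rw [key]
    _ ≤ ‖w - w'‖ + (‖w'‖ - ‖w‖) := by linarith
    _ ≤ ‖w - w'‖ + ‖w' - w‖ := by
        have := norm_sub_norm_le w' w
        linarith
    _ = 2 * ‖w - w'‖ := by rw [norm_sub_rev w' w]; ring

lemma projBall_lip {R : ℝ} (hR : 0 ≤ R) (w w' : E') :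
    ‖projBall R w - projBall R w'‖ ≤ 2 * ‖w - w'‖ := by
  rcases le_or_gt ‖w‖ R with h1 | h1 <;> rcases le_or_gt ‖w'‖ R with h2 | h2
  · rw [projBall_eq_self h1, projBall_eq_self h2]
    have := norm_nonneg (w - w'); linarith
  · exact projBall_aux hR h1 h2
  · rw [norm_sub_rev, norm_sub_rev w]
    exact projBall_aux hR h2 h1
  · have ha : 0 < ‖w‖ := lt_of_le_of_lt hR h1
    have hb : 0 < ‖w'‖ := lt_of_le_of_lt hR h2
    rw [projBall, if_neg (not_le.mpr h1), projBall, if_neg (not_le.mpr h2)]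
    have step : ‖(R / ‖w‖) • w - (R / ‖w'‖) • w'‖ ≤
        ‖(R / ‖w‖) • w - (R / ‖w‖) • w'‖ + ‖(R / ‖w‖) • w' - (R / ‖w'‖) • w'‖ :=
      norm_sub_le_norm_sub_add_norm_sub _ _ _
    have t1 : ‖(R / ‖w‖) • w - (R / ‖w‖) • w'‖ ≤ ‖w - w'‖ := by
      rw [← smul_sub, norm_smul, Real.norm_eq_abs, abs_of_nonneg (div_nonneg hR ha.le)]
      have h3 : R / ‖w‖ ≤ 1 := (div_le_one ha).mpr h1.le
      have := norm_nonneg (w - w')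
      nlinarith
    have t2 : ‖(R / ‖w‖) • w' - (R / ‖w'‖) • w'‖ ≤ ‖w - w'‖ := by
      rw [← sub_smul, norm_smul, Real.norm_eq_abs]
      have habs : |R / ‖w‖ - R / ‖w'‖| * ‖w'‖ = R * |‖w'‖ - ‖w‖| / ‖w‖ := by
        rw [div_sub_div _ _ ha.ne' hb.ne']
        rw [abs_div, abs_of_nonneg (by positivity : (0:ℝ) ≤ ‖w‖ * ‖w'‖)]
        rw [show R * ‖w'‖ - ‖w‖ * R = R * (‖w'‖ - ‖w‖) by ring, abs_mul,
          abs_of_nonneg hR]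
        field_simp
      rw [habs]
      have h4 : |‖w'‖ - ‖w‖| ≤ ‖w' - w‖ := abs_norm_sub_norm_le w' w
      rw [norm_sub_rev w' w] at h4
      have h5 : R * |‖w'‖ - ‖w‖| ≤ ‖w‖ * ‖w - w'‖ := by nlinarith [abs_nonneg (‖w'‖ - ‖w‖)]
      rw [div_le_iff₀ ha] ; nlinarith
    calc ‖(R / ‖w‖) • w - (R / ‖w'‖) • w'‖ ≤ ‖w - w'‖ + ‖w - w'‖ := by
          have := step; linarith
      _ = 2 * ‖w - w'‖ := by ring


lemma locLip_compact {α : Type*} [MetricSpace α] {f : α → ℝ} (hf : LocallyLipschitz f)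
    {s : Set α} (hs : IsCompact s) :
    ∃ K : ℝ, 0 ≤ K ∧ ∀ x ∈ s, ∀ y ∈ s, dist (f x) (f y) ≤ K * dist x y := by
  have H : ∀ x : α, ∃ (K : ℝ≥0) (ε : ℝ), 0 < ε ∧ LipschitzOnWith K f (Metric.ball x (2 * ε)) := by
    intro x
    obtain ⟨K, t, ht, hlip⟩ := hf x
    obtain ⟨ε', hε', hball⟩ := Metric.mem_nhds_iff.mp ht
    refine ⟨K, ε' / 2, by linarith, hlip.mono ?_⟩
    intro z hz
    apply hball
    rw [Metric.mem_ball] at hz ⊢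
    linarith
  choose Kx εx hεx hlip using H
  obtain ⟨t, hts, hcov⟩ := hs.elim_nhds_subcover (fun x => Metric.ball x (εx x))
    (fun x _ => Metric.ball_mem_nhds x (hεx x))
  obtain ⟨B, hB⟩ := hs.exists_bound_of_continuousOn hf.continuous.continuousOn
  rcases t.eq_empty_or_nonempty with rfl | htne
  · refine ⟨0, le_rfl, fun x hx => absurd (hcov hx) (by simp)⟩
  have hB0 : ∀ x ∈ s, (0:ℝ) ≤ B := fun x hx => le_trans (norm_nonneg _) (hB x hx)
  set δ : ℝ := t.inf' htne εx with hδdef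
  have hδpos : 0 < δ := by
    rw [hδdef, Finset.lt_inf'_iff]
    exact fun i _ => hεx i
  set M₁ : ℝ := t.sup' htne (fun x => (Kx x : ℝ)) with hM₁
  set M₂ : ℝ := 2 * B / δ with hM₂
  refine ⟨max M₁ M₂, ?_, ?_⟩
  · obtain ⟨i, hi⟩ := htne
    refine le_trans ?_ (le_max_left _ _)
    have h0 : (0:ℝ) ≤ (Kx i : ℝ) := (Kx i).2
    exact le_trans h0 (Finset.le_sup' (fun x => ((Kx x : ℝ))) hi)
  intro x hx y hy
  obtain ⟨i, hit, hxi⟩ : ∃ i ∈ t, x ∈ Metric.ball i (εx i) := by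
    have := hcov hx
    simpa using this
  rcases lt_or_ge (dist x y) (εx i) with hcase | hcase
  · have hx2 : x ∈ Metric.ball i (2 * εx i) := by
      simp only [Metric.mem_ball] at hxi ⊢
      have := hεx i; linarith
    have hy2 : y ∈ Metric.ball i (2 * εx i) := by
      simp only [Metric.mem_ball] at hxi ⊢
      have : dist y i ≤ dist y x + dist x i := dist_triangle y x i
      rw [dist_comm y x] at this
      linarith
    have := (lipschitzOnWith_iff_dist_le_mul.mp (hlip i)) x hx2 y hy2
    refine this.trans ?_
    have hK : (Kx i : ℝ) ≤ max M₁ M₂ :=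
      le_trans (Finset.le_sup' (fun x => (Kx x : ℝ)) hit) (le_max_left _ _)
    exact mul_le_mul_of_nonneg_right hK dist_nonneg
  · have hδi : δ ≤ εx i := Finset.inf'_le _ hit
    have hdist : δ ≤ dist x y := le_trans hδi hcase
    have hfb : dist (f x) (f y) ≤ 2 * B := by
      rw [Real.dist_eq]
      have h1 := hB x hx
      have h2 := hB y hy
      rw [Real.norm_eq_abs] at h1 h2
      calc |f x - f y| ≤ |f x| + |f y| := abs_sub _ _
        _ ≤ 2 * B := by linarith
    refine hfb.trans ?_
    have hM₂le : M₂ ≤ max M₁ M₂ := le_max_right _ _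
    have h2B : 2 * B = M₂ * δ := by
      rw [hM₂]; field_simp
    rw [h2B]
    have hM₂0 : 0 ≤ M₂ := by
      have hBnn := hB0 x hx
      rw [hM₂]; positivity
    calc M₂ * δ ≤ M₂ * dist x y := by nlinarith
      _ ≤ max M₁ M₂ * dist x y := mul_le_mul_of_nonneg_right hM₂le dist_nonneg

section main
variable {n : ℕ} {f V W : EuclideanSpace ℝ (Fin n) → ℝ} {l1 l2 l3 l4 c1 c2 : ℝ}
  {v : ℝ → ℝ} {M r : ℝ}

lemma key_ineq (hn : 1 ≤ n) (hA1 : AssumptionA1 n f V W l1 l2 l3 l4 c1 c2)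
    (hM : 0 < M) (hvM : ∀ t : ℝ, 0 ≤ t → |v t| + |deriv v t| ≤ M) (hr : 1 ≤ r)
    {t : ℝ} (ht : 0 ≤ t) (z : EuclideanSpace ℝ (Fin n)) :
    fderiv ℝ V z (errField n f v r t z) ≤
      (1 / (2 * r)) * (V z + c1 ^ 2 * M ^ 2 / l1) := by
  have hr0 : (0:ℝ) < r := lt_of_lt_of_le one_pos hr
  set L := fderiv ℝ V z with hL
  set c : ℝ := (1 / r) * deriv v (t / r) with hc
  set i0 : Fin n := ⟨0, hn⟩ with hi0
  have h2r : (0:ℝ) < 1 / (2 * r) := by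
    apply div_pos one_pos; linarith
  have h1r : (0:ℝ) < 1 / r := by apply div_pos one_pos hr0
  have hct : |c| ≤ M / r := by
    have h1 : 0 ≤ t / r := div_nonneg ht hr0.le
    have h2 := hvM (t / r) h1
    have h3 : |deriv v (t / r)| ≤ M := by
      have := abs_nonneg (v (t / r)); linarith
    rw [hc, abs_mul, abs_of_nonneg h1r.le]
    rw [div_eq_mul_inv M r, mul_comm M r⁻¹, one_div]
    exact mul_le_mul_of_nonneg_left h3 (inv_nonneg.mpr hr0.le)
  have hgrad : |L (EuclideanSpace.single i0 1)| ≤ c1 * ‖z‖ :=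
    hA1.grad_bound z i0 (Or.inl rfl)
  have expand : fderiv ℝ V z (errField n f v r t z)
      = (∑ i : Fin n, L (EuclideanSpace.single i 1) *
          (if h : (i : ℕ) + 1 < n then z ⟨(i : ℕ) + 1, h⟩ else f z))
        - c * L (EuclideanSpace.single i0 1) := by
    rw [← hL, clm_expand]
    have : ∀ i : Fin n, errField n f v r t z i * L (EuclideanSpace.single i 1)
        = L (EuclideanSpace.single i 1) *
            (if h : (i : ℕ) + 1 < n then z ⟨(i : ℕ) + 1, h⟩ else f z)
          - (if (i : ℕ) = 0 then c else 0) * L (EuclideanSpace.single i 1) := by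
      intro i
      rw [errField_apply, sub_mul, mul_comm, ← hc]
    rw [Finset.sum_congr rfl (fun i _ => this i), Finset.sum_sub_distrib]
    congr 1
    rw [Finset.sum_eq_single i0]
    · simp [hi0]
    · intro i _ hne
      have : (i : ℕ) ≠ 0 := by
        intro h0
        exact hne (Fin.ext (by simpa [hi0] using h0))
      simp [this]
    · intro h; exact absurd (Finset.mem_univ i0) h
  rw [expand]
  have hlyap := hA1.lyapunov z
  have hW : l3 * ‖z‖ ^ 2 ≤ W z := hA1.W_lower z
  have hV : l1 * ‖z‖ ^ 2 ≤ V z := hA1.V_lower z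
  have habs : -(c * L (EuclideanSpace.single i0 1)) ≤ (M / r) * (c1 * ‖z‖) := by
    have h1 : -(c * L (EuclideanSpace.single i0 1)) ≤ |c * L (EuclideanSpace.single i0 1)| :=
      neg_le_abs _
    rw [abs_mul] at h1
    refine h1.trans ?_
    exact mul_le_mul hct hgrad (abs_nonneg _) (div_nonneg hM.le hr0.le)
  have amgm : (M / r) * (c1 * ‖z‖) ≤ (1 / (2 * r)) * (l1 * ‖z‖ ^ 2 + c1 ^ 2 * M ^ 2 / l1) := by
    have hl1 : (0:ℝ) < l1 := hA1.l1_pos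
    have base : 2 * (c1 * M * ‖z‖) * l1 ≤ (l1 * ‖z‖ ^ 2 + c1 ^ 2 * M ^ 2 / l1) * l1 := by
      have h1 : (0:ℝ) ≤ (l1 * ‖z‖ - c1 * M) ^ 2 := sq_nonneg _
      have h2 : c1 ^ 2 * M ^ 2 / l1 * l1 = c1 ^ 2 * M ^ 2 := by field_simp
      nlinarith
    have base' : 2 * (c1 * M * ‖z‖) ≤ l1 * ‖z‖ ^ 2 + c1 ^ 2 * M ^ 2 / l1 :=
      le_of_mul_le_mul_right base hl1
    calc (M / r) * (c1 * ‖z‖) = (1 / (2 * r)) * (2 * (c1 * M * ‖z‖)) := by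
          field_simp
      _ ≤ (1 / (2 * r)) * (l1 * ‖z‖ ^ 2 + c1 ^ 2 * M ^ 2 / l1) :=
          mul_le_mul_of_nonneg_left base' h2r.le
  have hWnn : 0 ≤ W z := le_trans (mul_nonneg hA1.l3_pos.le (sq_nonneg _)) hW
  have hfinal : (1 / (2 * r)) * (l1 * ‖z‖ ^ 2 + c1 ^ 2 * M ^ 2 / l1)
      ≤ (1 / (2 * r)) * (V z + c1 ^ 2 * M ^ 2 / l1) := by
    nlinarith [h2r.le]
  linarith

lemma gron (hn : 1 ≤ n) (hA1 : AssumptionA1 n f V W l1 l2 l3 l4 c1 c2)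
    (hM : 0 < M) (hvM : ∀ t : ℝ, 0 ≤ t → |v t| + |deriv v t| ≤ M) (hr : 1 ≤ r)
    (y : ℝ → EuclideanSpace ℝ (Fin n)) (T : ℝ)
    (hcont : ContinuousOn y (Icc 0 T))
    (hderiv : ∀ t ∈ Ioo 0 T, HasDerivAt y (errField n f v r t (y t)) t) :
    ∀ t ∈ Icc 0 T, V (y t) + c1 ^ 2 * M ^ 2 / l1 ≤
      (V (y 0) + c1 ^ 2 * M ^ 2 / l1) * Real.exp (t / (2 * r)) := by
  have hr0 : (0:ℝ) < r := lt_of_lt_of_le one_pos hr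
  set K : ℝ := c1 ^ 2 * M ^ 2 / l1 with hK
  set H : ℝ → ℝ := fun t => (V (y t) + K) * Real.exp (-(t / (2 * r))) with hH
  have hVy : ContinuousOn (fun t => V (y t)) (Icc 0 T) :=
    hA1.V_contDiff.continuous.comp_continuousOn hcont
  have hHcont : ContinuousOn H (Icc 0 T) :=
    (hVy.add continuousOn_const).mul
      ((Real.continuous_exp.comp (continuous_id.div_const (2*r)).neg).continuousOn)
  have hHD : ∀ t ∈ Ioo 0 T, HasDerivAt H
      ((fderiv ℝ V (y t) (errField n f v r t (y t))) * Real.exp (-(t / (2 * r)))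
        + (V (y t) + K) * (Real.exp (-(t / (2 * r))) * (-(1 / (2 * r))))) t := by
    intro t ht
    have hy := hderiv t ht
    have hVd : DifferentiableAt ℝ V (y t) :=
      (hA1.V_contDiff.differentiable two_ne_zero).differentiableAt
    have hVc : HasDerivAt (fun s => V (y s))
        (fderiv ℝ V (y t) (errField n f v r t (y t))) t :=
      hVd.hasFDerivAt.comp_hasDerivAt t hy
    have hlin : HasDerivAt (fun s : ℝ => -(s / (2 * r))) (-(1 / (2 * r))) t := by
      exact ((hasDerivAt_id t).div_const (2*r)).neg
    have hexp : HasDerivAt (fun s : ℝ => Real.exp (-(s / (2 * r))))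
        (Real.exp (-(t / (2 * r))) * (-(1 / (2 * r)))) t := hlin.exp
    have := (hVc.add_const K).mul hexp
    exact this
  have hanti : AntitoneOn H (Icc 0 T) := by
    refine antitoneOn_of_deriv_nonpos (convex_Icc 0 T) hHcont ?_ ?_
    · intro t ht
      rw [interior_Icc] at ht
      exact ((hHD t ht).differentiableAt).differentiableWithinAt
    intro t ht
    rw [interior_Icc] at ht
    rw [(hHD t ht).deriv]
    have hkey := key_ineq hn hA1 hM hvM hr (le_of_lt ht.1) (y t)
    have hexp_pos : (0:ℝ) < Real.exp (-(t / (2 * r))) := Real.exp_pos _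
    rw [← hK] at hkey
    nlinarith
  intro t ht
  have h0 : (0:ℝ) ∈ Icc 0 T := ⟨le_rfl, le_trans ht.1 ht.2⟩
  have hHt : H t ≤ H 0 := hanti h0 ht ht.1
  have h00 : H 0 = V (y 0) + K := by simp [hH]
  have hmul := mul_le_mul_of_nonneg_right hHt (le_of_lt (Real.exp_pos (t / (2 * r))))
  rw [h00] at hmul
  calc V (y t) + K = H t * Real.exp (t / (2 * r)) := by
        rw [hH]; simp only; rw [mul_assoc, ← Real.exp_add]; simp
    _ ≤ (V (y 0) + K) * Real.exp (t / (2 * r)) := hmul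
end main

section exist

variable {n : ℕ} {f V W : EuclideanSpace ℝ (Fin n) → ℝ} {l1 l2 l3 l4 c1 c2 : ℝ}
  {v : ℝ → ℝ} {M r : ℝ}

lemma errField_dist (t : ℝ) (w w' : EuclideanSpace ℝ (Fin n)) :
    ‖errField n f v r t w - errField n f v r t w'‖ ≤
      Real.sqrt n * (‖w - w'‖ + |f w - f w'|) := by
  apply norm_le_sqrt_mul _ (by positivity)
  intro i
  have hco : (errField n f v r t w - errField n f v r t w') i
      = (if h : (i : ℕ) + 1 < n then w ⟨(i : ℕ) + 1, h⟩ - w' ⟨(i : ℕ) + 1, h⟩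
          else f w - f w') := by
    rw [PiLp.sub_apply, errField_apply, errField_apply]
    by_cases h : (i : ℕ) + 1 < n
    · rw [dif_pos h, dif_pos h, dif_pos h]; ring
    · rw [dif_neg h, dif_neg h, dif_neg h]; ring
  rw [hco]
  by_cases h : (i : ℕ) + 1 < n
  · rw [dif_pos h]
    have h1 : |(w - w') ⟨(i : ℕ) + 1, h⟩| ≤ ‖w - w'‖ := abs_coord_le _ _
    rw [PiLp.sub_apply] at h1
    have := abs_nonneg (f w - f w'); linarith
  · rw [dif_neg h]
    have := norm_nonneg (w - w'); linarith

lemma errField_norm (t : ℝ) (w : EuclideanSpace ℝ (Fin n)) :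
    ‖errField n f v r t w‖ ≤
      Real.sqrt n * (‖w‖ + |f w| + |(1 / r) * deriv v (t / r)|) := by
  apply norm_le_sqrt_mul _ (by positivity)
  intro i
  rw [errField_apply]
  have h1 : |(if h : (i : ℕ) + 1 < n then w ⟨(i : ℕ) + 1, h⟩ else f w)| ≤ ‖w‖ + |f w| := by
    by_cases h : (i : ℕ) + 1 < n
    · rw [dif_pos h]
      have := abs_coord_le w ⟨(i : ℕ) + 1, h⟩
      have := abs_nonneg (f w); linarith
    · rw [dif_neg h]
      have := norm_nonneg w; linarith
  have h2 : |(if (i : ℕ) = 0 then (1 / r) * deriv v (t / r) else 0)|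
      ≤ |(1 / r) * deriv v (t / r)| := by
    by_cases h : (i : ℕ) = 0
    · rw [if_pos h]
    · rw [if_neg h]; simp [abs_nonneg]; positivity
  calc |(if h : (i : ℕ) + 1 < n then w ⟨(i : ℕ) + 1, h⟩ else f w)
        - (if (i : ℕ) = 0 then (1 / r) * deriv v (t / r) else 0)|
      ≤ |(if h : (i : ℕ) + 1 < n then w ⟨(i : ℕ) + 1, h⟩ else f w)|
        + |(if (i : ℕ) = 0 then (1 / r) * deriv v (t / r) else 0)| := abs_sub _ _
    _ ≤ ‖w‖ + |f w| + |(1 / r) * deriv v (t / r)| := by linarith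

lemma errField_cont_t (hn : 1 ≤ n) (hv : ContDiff ℝ 1 v)
    (x : EuclideanSpace ℝ (Fin n)) :
    Continuous (fun t => errField n f v r t x) := by
  have heq : (fun t => errField n f v r t x) = fun t =>
      errField n f v r 0 x + ((1 / r) * deriv v (0 / r) - (1 / r) * deriv v (t / r)) •
        EuclideanSpace.single (⟨0, hn⟩ : Fin n) (1 : ℝ) := by
    funext t
    ext i
    rw [PiLp.add_apply, PiLp.smul_apply, errField_apply, errField_apply,
      EuclideanSpace.single_apply]
    by_cases h : (i : ℕ) = 0
    · have hii : i = (⟨0, hn⟩ : Fin n) := Fin.ext h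
      rw [if_pos h, if_pos h, if_pos hii]
      simp only [smul_eq_mul, mul_one]
      ring
    · have hii : i ≠ (⟨0, hn⟩ : Fin n) := fun hh => h (by rw [hh])
      rw [if_neg h, if_neg h, if_neg hii]
      simp only [smul_eq_mul, mul_zero]
      ring
  rw [heq]
  have hc : Continuous (fun t : ℝ => (1 / r) * deriv v (0 / r) - (1 / r) * deriv v (t / r)) :=
    continuous_const.sub (continuous_const.mul
      ((hv.continuous_deriv le_rfl).comp (continuous_id.div_const r)))
  exact continuous_const.add (hc.smul continuous_const)

set_option maxHeartbeats 1000000 in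
lemma exists_sol_upto (hn : 1 ≤ n) (hA1 : AssumptionA1 n f V W l1 l2 l3 l4 c1 c2)
    (hv : ContDiff ℝ 1 v) (hM : 0 < M)
    (hvM : ∀ t : ℝ, 0 ≤ t → |v t| + |deriv v t| ≤ M) (hr : 1 ≤ r)
    (y0 : EuclideanSpace ℝ (Fin n)) (T : ℝ) (hT : 1 ≤ T) :
    ∃ α : ℝ → EuclideanSpace ℝ (Fin n), α 0 = y0 ∧
      ContinuousOn α (Icc 0 T) ∧
      ∀ t ∈ Ico 0 T, HasDerivAt α (errField n f v r t (α t)) t := by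
  have hr0 : (0:ℝ) < r := lt_of_lt_of_le one_pos hr
  have hl1 : (0:ℝ) < l1 := hA1.l1_pos
  set K : ℝ := c1 ^ 2 * M ^ 2 / l1 with hK
  have hKpos : 0 < K := by
    rw [hK]
    exact div_pos (mul_pos (pow_pos hA1.c1_pos 2) (pow_pos hM 2)) hl1
  have hVy0 : 0 ≤ V y0 := le_trans (mul_nonneg hl1.le (sq_nonneg _)) (hA1.V_lower y0)
  set Q : ℝ := (1 / l1) * (V y0 + K) with hQ
  have hQpos : 0 < Q := mul_pos (div_pos one_pos hl1) (by linarith)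
  have h2r0 : (0:ℝ) < 2 * r := by linarith
  set B : ℝ := Real.sqrt (Q * Real.exp (T / (2 * r))) with hB
  have hQe : 0 < Q * Real.exp (T / (2 * r)) := mul_pos hQpos (Real.exp_pos _)
  have hBpos : 0 < B := Real.sqrt_pos.mpr hQe
  have hBsq : B ^ 2 = Q * Real.exp (T / (2 * r)) := Real.sq_sqrt hQe.le
  set R' : ℝ := B + 1 with hR'
  have hR'pos : 0 < R' := by rw [hR']; linarith
  have hy0B : ‖y0‖ ≤ B := by
    have h1 : l1 * ‖y0‖ ^ 2 ≤ V y0 := hA1.V_lower y0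
    have h2 : ‖y0‖ ^ 2 ≤ Q := by
      rw [hQ, one_div, inv_mul_eq_div, le_div_iff₀ hl1]
      nlinarith
    have hexp1 : (1:ℝ) ≤ Real.exp (T / (2 * r)) :=
      Real.one_le_exp (div_nonneg (by linarith) h2r0.le)
    have h3 : ‖y0‖ ^ 2 ≤ Q * Real.exp (T / (2 * r)) := by nlinarith
    calc ‖y0‖ = Real.sqrt (‖y0‖ ^ 2) := (Real.sqrt_sq (norm_nonneg _)).symm
      _ ≤ B := by rw [hB]; exact Real.sqrt_le_sqrt h3
  obtain ⟨Kf, hKf0, hKf⟩ := locLip_compact hA1.f_locallyLipschitz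
    (isCompact_closedBall (0 : EuclideanSpace ℝ (Fin n)) R')
  obtain ⟨Bf, hBf⟩ := (isCompact_closedBall (0 : EuclideanSpace ℝ (Fin n)) R').exists_bound_of_continuousOn
    hA1.f_locallyLipschitz.continuous.continuousOn
  have hBf0 : 0 ≤ Bf := le_trans (norm_nonneg _) (hBf 0 (Metric.mem_closedBall_self hR'pos.le))
  have hccont : Continuous (fun t : ℝ => (1 / r) * deriv v (t / r)) :=
    continuous_const.mul ((hv.continuous_deriv le_rfl).comp (continuous_id.div_const r))
  obtain ⟨Mc, hMc⟩ := (isCompact_Icc (a := (-1:ℝ)) (b := T)).exists_bound_of_continuousOn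
    hccont.continuousOn
  have hMc0 : 0 ≤ Mc := le_trans (norm_nonneg _) (hMc (-1) ⟨le_rfl, by linarith⟩)
  set Lr : ℝ := Real.sqrt n * (1 + Kf) * 2 with hLr
  have hLr0 : 0 ≤ Lr := by
    rw [hLr]; positivity
  set G : ℝ → EuclideanSpace ℝ (Fin n) → EuclideanSpace ℝ (Fin n) :=
    fun t w => errField n f v r t (projBall R' w) with hG
  have hGdef : ∀ (t : ℝ) (w : EuclideanSpace ℝ (Fin n)),
      G t w = errField n f v r t (projBall R' w) := fun _ _ => rfl
  have hPmem : ∀ w : EuclideanSpace ℝ (Fin n),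
      projBall R' w ∈ Metric.closedBall (0 : EuclideanSpace ℝ (Fin n)) R' :=
    fun w => mem_closedBall_zero_iff.mpr (norm_projBall_le hR'pos.le w)
  have hGlip : ∀ (t : ℝ) (w w' : EuclideanSpace ℝ (Fin n)),
      dist (G t w) (G t w') ≤ Lr * dist w w' := by
    intro t w w'
    rw [dist_eq_norm, dist_eq_norm, hG]
    have h1 := errField_dist (f := f) (v := v) (r := r) t (projBall R' w) (projBall R' w')
    have h2 : |f (projBall R' w) - f (projBall R' w')| ≤ Kf * ‖projBall R' w - projBall R' w'‖ := by
      have := hKf _ (hPmem w) _ (hPmem w')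
      rwa [Real.dist_eq, dist_eq_norm] at this
    have h3 : ‖projBall R' w - projBall R' w'‖ ≤ 2 * ‖w - w'‖ := projBall_lip hR'pos.le w w'
    have hs0 : (0:ℝ) ≤ Real.sqrt n := Real.sqrt_nonneg _
    calc ‖errField n f v r t (projBall R' w) - errField n f v r t (projBall R' w')‖
        ≤ Real.sqrt n * (‖projBall R' w - projBall R' w'‖
            + |f (projBall R' w) - f (projBall R' w')|) := h1
      _ ≤ Real.sqrt n * ((1 + Kf) * ‖projBall R' w - projBall R' w'‖) := by nlinarith
      _ ≤ Real.sqrt n * ((1 + Kf) * (2 * ‖w - w'‖)) := by nlinarith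
      _ = Lr * ‖w - w'‖ := by rw [hLr]; ring
  set C : ℝ := Real.sqrt n * (R' + Bf + Mc) with hC
  have hC0 : 0 ≤ C := by
    rw [hC]
    have : (0:ℝ) ≤ Real.sqrt n := Real.sqrt_nonneg _
    nlinarith
  have hGnorm : ∀ t ∈ Icc (-1:ℝ) T, ∀ x : EuclideanSpace ℝ (Fin n), ‖G t x‖ ≤ C := by
    intro t ht x
    rw [hG]
    refine le_trans (errField_norm t (projBall R' x)) ?_
    have h1 : ‖projBall R' x‖ ≤ R' := norm_projBall_le hR'pos.le x
    have h2 : |f (projBall R' x)| ≤ Bf := by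
      have := hBf _ (hPmem x); rwa [Real.norm_eq_abs] at this
    have h3 : |(1 / r) * deriv v (t / r)| ≤ Mc := by
      have := hMc t ht; rwa [Real.norm_eq_abs] at this
    rw [hC]
    have hs0 : (0:ℝ) ≤ Real.sqrt n := Real.sqrt_nonneg _
    nlinarith
  set R : ℝ := C * max T 1 with hR
  have hR0 : 0 ≤ R := by
    rw [hR]
    exact mul_nonneg hC0 (le_trans zero_le_one (le_max_right T 1))
  have hpl : IsPicardLindelof G (tmin := -1) (tmax := T) ⟨0, ⟨by linarith, by linarith⟩⟩ y0
      (Real.toNNReal R) 0 (Real.toNNReal C) (Real.toNNReal Lr) := by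
    refine ⟨?_, ?_, ?_, ?_⟩
    · intro t _
      rw [lipschitzOnWith_iff_dist_le_mul]
      intro x _ y _
      refine (hGlip t x y).trans ?_
      rw [Real.coe_toNNReal _ hLr0]
    · intro x _
      exact (errField_cont_t hn hv (projBall R' x)).continuousOn
    · intro t ht x _
      exact (hGnorm t ht x).trans (Real.le_coe_toNNReal C)
    · have hmax : max (T - 0) (0 - (-1)) = max T 1 := by norm_num
      show ((Real.toNNReal C : ℝ)) * max (T - 0) (0 - (-1)) ≤ _
      rw [hmax, Real.coe_toNNReal _ hC0]
      simp [Real.coe_toNNReal _ hR0, hR]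
  obtain ⟨α, hα0, hαd⟩ := hpl.exists_eq_forall_mem_Icc_hasDerivWithinAt₀
  replace hα0 : α 0 = y0 := hα0
  have hαcont : ContinuousOn α (Icc (-1) T) := fun s hs => (hαd s hs).continuousWithinAt
  have hαdi : ∀ t ∈ Ioo (-1:ℝ) T, HasDerivAt α (G t (α t)) t := fun t ht =>
    (hαd t (Ioo_subset_Icc_self ht)).hasDerivAt (Icc_mem_nhds ht.1 ht.2)
  have subclaim : ∀ τ ∈ Icc (0:ℝ) T, (∀ s ∈ Icc (0:ℝ) τ, ‖α s‖ ≤ B) →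
      ∀ s ∈ Icc (0:ℝ) τ, ‖α s‖ ^ 2 ≤ Q * Real.exp (s / (2 * r)) := by
    intro τ hτ hball s hs
    have hsub : Icc (0:ℝ) τ ⊆ Icc (-1) T := Icc_subset_Icc (by linarith) hτ.2
    have hder : ∀ u ∈ Ioo (0:ℝ) τ, HasDerivAt α (errField n f v r u (α u)) u := by
      intro u hu
      have h1 := hαdi u ⟨by linarith [hu.1], lt_of_lt_of_le hu.2 hτ.2⟩
      have h2 : projBall R' (α u) = α u :=
        projBall_eq_self (le_trans (hball u ⟨hu.1.le, hu.2.le⟩) (by rw [hR']; linarith))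
      rwa [hGdef, h2] at h1
    have hgr := gron hn hA1 hM hvM hr α τ (hαcont.mono hsub) hder s hs
    rw [hα0, ← hK] at hgr
    have h1 : l1 * ‖α s‖ ^ 2 ≤ V (α s) := hA1.V_lower _
    rw [hQ, one_div, inv_mul_eq_div, div_mul_eq_mul_div, le_div_iff₀ hl1]
    nlinarith
  set S : Set ℝ := {t | t ∈ Icc (0:ℝ) T ∧ ∀ s ∈ Icc (0:ℝ) t, ‖α s‖ ≤ B} with hS
  have h0S : (0:ℝ) ∈ S := by
    refine ⟨⟨le_rfl, by linarith⟩, fun s hs => ?_⟩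
    have hs0 : s = 0 := le_antisymm hs.2 hs.1
    rw [hs0, hα0]; exact hy0B
  have hSne : S.Nonempty := ⟨0, h0S⟩
  have hSbdd : BddAbove S := ⟨T, fun t ht => ht.1.2⟩
  set τ := sSup S with hτdef
  have hτmem : τ ∈ Icc (0:ℝ) T := ⟨le_csSup hSbdd h0S, csSup_le hSne fun t ht => ht.1.2⟩
  have hτS : ∀ s ∈ Icc (0:ℝ) τ, ‖α s‖ ≤ B := by
    intro s hs
    rcases lt_or_eq_of_le hs.2 with hlt | heq
    · obtain ⟨t', ht'S, hst'⟩ := exists_lt_of_lt_csSup hSne hlt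
      exact ht'S.2 s ⟨hs.1, hst'.le⟩
    · have hF : IsClosed {u | u ∈ Icc (-1:ℝ) T ∧ ‖α u‖ ≤ B} := by
        have h := hαcont.norm.preimage_isClosed_of_isClosed isClosed_Icc
          (isClosed_Iic (a := B))
        exact h
      have hSsub : S ⊆ {u | u ∈ Icc (-1:ℝ) T ∧ ‖α u‖ ≤ B} := fun t ht =>
        ⟨⟨by linarith [ht.1.1], ht.1.2⟩, ht.2 t ⟨ht.1.1, le_rfl⟩⟩
      have hcl := csSup_mem_closure hSne hSbdd
      have hτF : τ ∈ {u | u ∈ Icc (-1:ℝ) T ∧ ‖α u‖ ≤ B} :=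
        (hF.closure_subset_iff.mpr hSsub) hcl
      rw [heq]
      exact hτF.2
  have hτT : τ = T := by
    by_contra hne
    have hlt : τ < T := lt_of_le_of_ne hτmem.2 hne
    have hsqτ : ‖α τ‖ ^ 2 ≤ Q * Real.exp (τ / (2 * r)) :=
      subclaim τ hτmem hτS τ ⟨hτmem.1, le_rfl⟩
    have hstrict : ‖α τ‖ < B := by
      have h1 : Q * Real.exp (τ / (2 * r)) < Q * Real.exp (T / (2 * r)) := by
        apply mul_lt_mul_of_pos_left _ hQpos
        exact Real.exp_lt_exp.mpr (by apply div_lt_div_of_pos_right hlt h2r0)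
      have h2 : ‖α τ‖ ^ 2 < B ^ 2 := by rw [hBsq]; linarith
      nlinarith [norm_nonneg (α τ)]
    have hcontτ : ContinuousAt α τ :=
      (hαdi τ ⟨by linarith [hτmem.1], hlt⟩).continuousAt
    obtain ⟨δ, hδ, hδp⟩ := Metric.continuousAt_iff.mp hcontτ (B - ‖α τ‖) (by linarith)
    set t' := min T (τ + δ / 2) with ht'def
    have hτt' : τ < t' := lt_min hlt (by linarith)
    have ht'S : t' ∈ S := by
      refine ⟨⟨by linarith [hτmem.1], min_le_left _ _⟩, fun s hs => ?_⟩
      rcases le_or_gt s τ with h | h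
      · exact hτS s ⟨hs.1, h⟩
      · have hd : dist s τ < δ := by
          rw [Real.dist_eq, abs_of_pos (by linarith)]
          have ha : s ≤ t' := hs.2
          have hb : t' ≤ τ + δ / 2 := min_le_right _ _
          linarith
        have hnear := hδp hd
        rw [dist_eq_norm] at hnear
        have htri : ‖α s‖ - ‖α τ‖ ≤ ‖α s - α τ‖ := norm_sub_norm_le _ _
        linarith
    have : t' ≤ τ := le_csSup hSbdd ht'S
    linarith
  refine ⟨α, hα0, hαcont.mono (Icc_subset_Icc (by linarith) le_rfl), ?_⟩
  intro t ht
  have h1 := hαdi t ⟨by linarith [ht.1], ht.2⟩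
  have hballt : ‖α t‖ ≤ B := by
    apply hτS t
    rw [hτT]
    exact ⟨ht.1, ht.2.le⟩
  have h2 : projBall R' (α t) = α t := projBall_eq_self (by rw [hR']; linarith)
  rwa [hGdef, h2] at h1

end exist


section uniq
variable {n : ℕ} {f V W : EuclideanSpace ℝ (Fin n) → ℝ} {l1 l2 l3 l4 c1 c2 : ℝ}
  {v : ℝ → ℝ} {r : ℝ}

lemma uniq_on (hA1 : AssumptionA1 n f V W l1 l2 l3 l4 c1 c2) (T : ℝ) (hT : 0 ≤ T)
    (y1 y2 : ℝ → EuclideanSpace ℝ (Fin n))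
    (h1c : ContinuousOn y1 (Icc 0 T))
    (h1d : ∀ t ∈ Ico (0:ℝ) T, HasDerivAt y1 (errField n f v r t (y1 t)) t)
    (h2c : ContinuousOn y2 (Icc 0 T))
    (h2d : ∀ t ∈ Ico (0:ℝ) T, HasDerivAt y2 (errField n f v r t (y2 t)) t)
    (h0 : y1 0 = y2 0) : EqOn y1 y2 (Icc 0 T) := by
  obtain ⟨B1, hB1⟩ := isCompact_Icc.exists_bound_of_continuousOn h1c
  obtain ⟨B2, hB2⟩ := isCompact_Icc.exists_bound_of_continuousOn h2c
  set ρ : ℝ := max B1 B2 with hρ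
  have hm1 : ∀ t ∈ Icc (0:ℝ) T, y1 t ∈ Metric.closedBall (0:EuclideanSpace ℝ (Fin n)) ρ :=
    fun t ht => mem_closedBall_zero_iff.mpr (le_trans (hB1 t ht) (le_max_left _ _))
  have hm2 : ∀ t ∈ Icc (0:ℝ) T, y2 t ∈ Metric.closedBall (0:EuclideanSpace ℝ (Fin n)) ρ :=
    fun t ht => mem_closedBall_zero_iff.mpr (le_trans (hB2 t ht) (le_max_right _ _))
  obtain ⟨Kf, hKf0, hKf⟩ := locLip_compact hA1.f_locallyLipschitz
    (isCompact_closedBall (0:EuclideanSpace ℝ (Fin n)) ρ)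
  set Lr : ℝ := Real.sqrt n * (1 + Kf) with hLrdef
  have hLr0 : 0 ≤ Lr := by
    rw [hLrdef]; positivity
  have hlip : ∀ t : ℝ, LipschitzOnWith (Real.toNNReal Lr) (errField n f v r t)
      (Metric.closedBall (0:EuclideanSpace ℝ (Fin n)) ρ) := by
    intro t
    rw [lipschitzOnWith_iff_dist_le_mul]
    intro x hx y hy
    rw [dist_eq_norm, dist_eq_norm, Real.coe_toNNReal _ hLr0]
    have h1 := errField_dist (f := f) (v := v) (r := r) t x y
    have h2 : |f x - f y| ≤ Kf * ‖x - y‖ := by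
      have := hKf x hx y hy
      rwa [Real.dist_eq, dist_eq_norm] at this
    have hs0 : (0:ℝ) ≤ Real.sqrt n := Real.sqrt_nonneg _
    have hn0 : (0:ℝ) ≤ ‖x - y‖ := norm_nonneg _
    calc ‖errField n f v r t x - errField n f v r t y‖
        ≤ Real.sqrt n * (‖x - y‖ + |f x - f y|) := h1
      _ ≤ Lr * ‖x - y‖ := by rw [hLrdef]; nlinarith
  exact ODE_solution_unique_of_mem_Icc_right (fun t _ => hlip t) h1c
    (fun t ht => (h1d t ht).hasDerivWithinAt) (fun t ht => hm1 t (Ico_subset_Icc_self ht))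
    h2c (fun t ht => (h2d t ht).hasDerivWithinAt) (fun t ht => hm2 t (Ico_subset_Icc_self ht)) h0

end uniq


/-- under Assumption (A1), for bounded `C¹` input `v` (with
`|v(t)| + |v'(t)| ≤ M` on `[0,∞)`) and `r ≥ 1`, the time-scaled error system has,
for each initial value, a unique (global, no finite-time blow-up) solution on
`[0,∞)`, and every solution satisfies
`‖y(t)‖² ≤ (1/λ₁)(V(y(0)) + c₁²M²/λ₁) e^{t/(2r)}` for all `t ≥ 0`. -/
theorem error_system_global_solution_bound
    (n : ℕ) (hn : 1 ≤ n)
    (f V W : EuclideanSpace ℝ (Fin n) → ℝ) (l1 l2 l3 l4 c1 c2 : ℝ)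
    (hA1 : AssumptionA1 n f V W l1 l2 l3 l4 c1 c2)
    (v : ℝ → ℝ) (hv : ContDiff ℝ 1 v) (M : ℝ) (hM : 0 < M)
    (hvM : ∀ t : ℝ, 0 ≤ t → |v t| + |deriv v t| ≤ M)
    (r : ℝ) (hr : 1 ≤ r) (y0 : EuclideanSpace ℝ (Fin n)) :
    (∃ y : ℝ → EuclideanSpace ℝ (Fin n),
      (y 0 = y0 ∧ ∀ t : ℝ, 0 ≤ t → HasDerivAt y (errField n f v r t (y t)) t) ∧
      ∀ y' : ℝ → EuclideanSpace ℝ (Fin n),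
        (y' 0 = y0 ∧ ∀ t : ℝ, 0 ≤ t → HasDerivAt y' (errField n f v r t (y' t)) t) →
        ∀ t : ℝ, 0 ≤ t → y' t = y t) ∧
    (∀ y : ℝ → EuclideanSpace ℝ (Fin n),
      (y 0 = y0 ∧ ∀ t : ℝ, 0 ≤ t → HasDerivAt y (errField n f v r t (y t)) t) →
      ∀ t : ℝ, 0 ≤ t →
        ‖y t‖ ^ 2 ≤ (1 / l1) * (V (y 0) + c1 ^ 2 * M ^ 2 / l1) * Real.exp (t / (2 * r))) := by
  have hr0 : (0:ℝ) < r := lt_of_lt_of_le one_pos hr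
  have hl1 : (0:ℝ) < l1 := hA1.l1_pos
  have bound_clause : ∀ y : ℝ → EuclideanSpace ℝ (Fin n),
      (y 0 = y0 ∧ ∀ t : ℝ, 0 ≤ t → HasDerivAt y (errField n f v r t (y t)) t) →
      ∀ t : ℝ, 0 ≤ t →
        ‖y t‖ ^ 2 ≤ (1 / l1) * (V (y 0) + c1 ^ 2 * M ^ 2 / l1) * Real.exp (t / (2 * r)) := by
    intro y hy t ht
    have hcont : ContinuousOn y (Icc 0 t) :=
      fun s hs => ((hy.2 s hs.1).continuousAt).continuousWithinAt
    have hder : ∀ s ∈ Ioo (0:ℝ) t, HasDerivAt y (errField n f v r s (y s)) s :=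
      fun s hs => hy.2 s hs.1.le
    have hgr := gron hn hA1 hM hvM hr y t hcont hder t ⟨ht, le_rfl⟩
    have h1 := hA1.V_lower (y t)
    have hKpos : 0 < c1 ^ 2 * M ^ 2 / l1 :=
      div_pos (mul_pos (pow_pos hA1.c1_pos 2) (pow_pos hM 2)) hl1
    rw [one_div, inv_mul_eq_div, div_mul_eq_mul_div, le_div_iff₀ hl1]
    nlinarith
  refine ⟨?_, bound_clause⟩
  have hsol : ∀ k : ℕ, ∃ α : ℝ → EuclideanSpace ℝ (Fin n), α 0 = y0 ∧
      ContinuousOn α (Icc 0 ((k:ℝ)+1)) ∧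
      ∀ t ∈ Ico (0:ℝ) ((k:ℝ)+1), HasDerivAt α (errField n f v r t (α t)) t :=
    fun k => exists_sol_upto hn hA1 hv hM hvM hr y0 ((k:ℝ)+1)
      (le_add_of_nonneg_left (Nat.cast_nonneg k))
  choose A hA0 hAc hAd using hsol
  have hcons : ∀ (j k : ℕ) (t : ℝ), 0 ≤ t → t < (j:ℝ)+1 → t < (k:ℝ)+1 → A j t = A k t := by
    intro j k t h0t hj hk
    have h := uniq_on hA1 t h0t (A j) (A k)
      ((hAc j).mono (Icc_subset_Icc le_rfl hj.le))
      (fun s hs => hAd j s ⟨hs.1, lt_trans hs.2 hj⟩)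
      ((hAc k).mono (Icc_subset_Icc le_rfl hk.le))
      (fun s hs => hAd k s ⟨hs.1, lt_trans hs.2 hk⟩)
      (by rw [hA0 j, hA0 k])
    exact h ⟨h0t, le_rfl⟩
  set g : ℝ → EuclideanSpace ℝ (Fin n) := fun t => A ⌈t⌉₊ t with hgdef
  have hceil : ∀ t : ℝ, t < (⌈t⌉₊ : ℝ) + 1 := by
    intro t
    rcases le_or_gt t 0 with h | h
    · rw [Nat.ceil_eq_zero.mpr h]; push_cast; linarith
    · have := Nat.le_ceil t; linarith
  have hgA : ∀ (t : ℝ) (k : ℕ), 0 ≤ t → t < (k:ℝ)+1 → g t = A k t :=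
    fun t k h0t hk => hcons _ k t h0t (hceil t) hk
  have hg0 : g 0 = y0 := by
    rw [hgdef]; simp only [Nat.ceil_zero]; exact hA0 0
  have hgneg : ∀ t : ℝ, t ≤ 0 → g t = A 0 t := by
    intro t htle
    rw [hgdef]; simp only [Nat.ceil_eq_zero.mpr htle]
  have hgd : ∀ t : ℝ, 0 ≤ t → HasDerivAt g (errField n f v r t (g t)) t := by
    intro t ht
    rcases ht.eq_or_lt with heq | hpos
    · subst heq
      have hEq : ∀ s ∈ Ioo (-1:ℝ) 1, g s = A 0 s := by
        intro s hs
        rcases le_or_gt s 0 with h | h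
        · exact hgneg s h
        · exact hgA s 0 h.le (by push_cast; linarith [hs.2])
      have hd0 : HasDerivAt (A 0) (errField n f v r 0 (A 0 0)) 0 :=
        hAd 0 0 ⟨le_rfl, by norm_num⟩
      have hg00 : g 0 = A 0 0 := hEq 0 (by norm_num)
      have hder : HasDerivAt g (errField n f v r 0 (A 0 0)) 0 :=
        hd0.congr_of_eventuallyEq
          (Filter.eventuallyEq_of_mem (Ioo_mem_nhds (by norm_num) (by norm_num)) hEq)
      rwa [← hg00] at hder
    · set k : ℕ := ⌈t⌉₊ + 1 with hkdef
      have htk : t < (k:ℝ) := by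
        rw [hkdef]; push_cast; linarith [hceil t]
      have htk1 : t < (k:ℝ) + 1 := by linarith
      have hEq : ∀ s ∈ Ioo (0:ℝ) (k:ℝ), g s = A k s :=
        fun s hs => hgA s k hs.1.le (by linarith [hs.2])
      have hd : HasDerivAt (A k) (errField n f v r t (A k t)) t := hAd k t ⟨ht, htk1⟩
      have hgt : g t = A k t := hEq t ⟨hpos, htk⟩
      have hder : HasDerivAt g (errField n f v r t (A k t)) t :=
        hd.congr_of_eventuallyEq
          (Filter.eventuallyEq_of_mem (Ioo_mem_nhds hpos htk) hEq)
      rwa [← hgt] at hder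
  refine ⟨g, ⟨hg0, fun t ht => hgd t ht⟩, ?_⟩
  intro y' hy' t ht
  have h1c : ContinuousOn y' (Icc 0 t) :=
    fun s hs => ((hy'.2 s hs.1).continuousAt).continuousWithinAt
  have h2c : ContinuousOn g (Icc 0 t) :=
    fun s hs => ((hgd s hs.1).continuousAt).continuousWithinAt
  exact uniq_on hA1 t ht y' g h1c (fun s hs => hy'.2 s hs.1) h2c
    (fun s hs => hgd s hs.1) (by rw [hy'.1, hg0]) ⟨ht, le_rfl⟩
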